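/- Let n ≥ 3 and let C_n be the cycle graph of length n. Then v(J(C_n)) = ⌊n/2⌋. -/

import Mathlib

/-!
The cover ideal `J` is the intersection of the primes `⟨x_u, x_v⟩` over the edges `{u, v}`.
If `J : f` is prime it contains one of them, `⟨x_a, x_b⟩`. Then `x_a f, x_b f ∈ J`, and every
other edge misses `a` or `b`, so `f` lies in its prime: every monomial of `f` is a vertex cover
of the graph minus the edge `{a, b}`. For `C_n` that graph is a path on `n` vertices, which has
`⌊n/2⌋` disjoint edges, so `deg f ≥ ⌊n/2⌋`. Conversely, if `S` covers that path and avoids `a`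
and `b`, then `J : ∏_{i ∈ S} x_i = ⟨x_a, x_b⟩`, and such an `S` of size `⌊n/2⌋` exists.
-/

open MvPolynomial CategoryTheory

noncomputable section

/-- A set of vertices is a vertex cover if it meets every edge. -/
def IsVertexCover {V : Type} (G : SimpleGraph V) (C : Set V) : Prop :=
  ∀ ⦃u v : V⦄, G.Adj u v → u ∈ C ∨ v ∈ C

/-- A vertex cover minimal with respect to inclusion. -/
def IsMinimalVertexCover {V : Type} (G : SimpleGraph V) (C : Set V) : Prop :=
  IsVertexCover G C ∧ ∀ C' ⊆ C, IsVertexCover G C' → C' = C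

/-- `α₀(G)`: the minimum cardinality of a vertex cover of `G`. -/
def coverNumber {V : Type} (G : SimpleGraph V) : ℕ :=
  sInf {k | ∃ C : Set V, IsVertexCover G C ∧ C.ncard = k}

/-- `bight(I(G))`: the maximum cardinality of a minimal vertex cover of `G`. -/
def bigHeight {V : Type} (G : SimpleGraph V) : ℕ :=
  sSup {k | ∃ C : Set V, IsMinimalVertexCover G C ∧ C.ncard = k}

/-- The edge ideal `I(G) ⊆ K[x_v : v ∈ V]`, generated by the monomials
`x_u * x_v` over the edges `{u,v}` of `G`. -/
def edgeIdeal (K : Type) [Field K] {V : Type} (G : SimpleGraph V) :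
    Ideal (MvPolynomial V K) :=
  Ideal.span {m | ∃ u v : V, G.Adj u v ∧ m = X u * X v}

/-- The cover ideal `J(G) = ⋂_{{u,v} ∈ E(G)} ⟨x_u, x_v⟩`. -/
def coverIdeal (K : Type) [Field K] {V : Type} (G : SimpleGraph V) :
    Ideal (MvPolynomial V K) :=
  ⨅ (u : V) (v : V) (_ : G.Adj u v), Ideal.span {X u, X v}

/-- The v-number of a graded ideal `I`: the least `d ≥ 0` such that there is a
homogeneous polynomial `f` of degree `d` with `I : f` a prime ideal. -/
def vNumber {K : Type} [Field K] {V : Type} (I : Ideal (MvPolynomial V K)) : ℕ :=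
  sInf {d | ∃ f : MvPolynomial V K, f.IsHomogeneous d ∧
    (I.colon (Ideal.span {f})).IsPrime}

/-- The homogeneous maximal ideal `⟨x_1, …, x_n⟩` of the polynomial ring. -/
def maxIdeal (K : Type) [Field K] (V : Type) : Ideal (MvPolynomial V K) :=
  Ideal.span (Set.range (X : V → MvPolynomial V K))

/-- The depth of the module `M` with respect to the ideal `J`: the supremum of
the lengths of regular sequences on `M` consisting of elements of `J`. -/
def mdepth {R : Type} [CommRing R] (J : Ideal R) (M : Type) [AddCommGroup M]
    [Module R M] : ℕ :=
  sSup {k | ∃ rs : List R, rs.length = k ∧ (∀ r ∈ rs, r ∈ J) ∧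
    RingTheory.Sequence.IsRegular M rs}

/-- The projective dimension of an `R`-module `M`, characterized by the
vanishing of `Ext^i(M, N)` for all `i > d` and all modules `N`. -/
def projDim (R : Type) [CommRing R] (M : ModuleCat.{0} R) : ℕ :=
  sInf {d : ℕ | ∀ (N : ModuleCat.{0} R) (i : ℕ), d < i →
    Subsingleton (((Ext R (ModuleCat.{0} R) i).obj (Opposite.op M)).obj N)}

open SimpleGraph

namespace MvPolynomial

variable {σ R : Type*} [CommRing R]

theorem isPrime_span_X_image [IsDomain R] (s : Set σ) :
    (Ideal.span (X '' s : Set (MvPolynomial σ R))).IsPrime := by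
  classical
  set φ : MvPolynomial σ R →ₐ[R] MvPolynomial σ R :=
    aeval fun i => if i ∈ s then 0 else X i
  suffices Ideal.span (X '' s) = RingHom.ker φ from this ▸ RingHom.ker_isPrime _
  set π := Ideal.Quotient.mkₐ R (Ideal.span (X '' s : Set (MvPolynomial σ R)))
  -- `φ` is the identity modulo the ideal, so its kernel lies in the ideal.
  have hπφ : π.comp φ = π := algHom_ext fun i => by
    by_cases hi : i ∈ s
    · simp only [φ, π, hi, AlgHom.comp_apply, aeval_X, if_true, map_zero]
      exact (Ideal.Quotient.eq_zero_iff_mem.2 <|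
        Ideal.subset_span (Set.mem_image_of_mem _ hi)).symm
    · simp [φ, hi]
  refine le_antisymm (Ideal.span_le.2 ?_) fun p hp => ?_
  · rintro _ ⟨i, hi, rfl⟩
    simp [φ, hi]
  · have h := AlgHom.congr_fun hπφ p
    rwa [AlgHom.comp_apply, RingHom.mem_ker.1 hp, map_zero, eq_comm, Ideal.Quotient.mkₐ_eq_mk,
      Ideal.Quotient.eq_zero_iff_mem] at h

theorem X_mem_span_X_image_iff [Nontrivial R] {s : Set σ} {i : σ} :
    (X i : MvPolynomial σ R) ∈ Ideal.span (X '' s) ↔ i ∈ s := by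
  classical
  simp [mem_ideal_span_X_image, support_X, Finsupp.single_apply]

theorem isPrime_span_X_pair [IsDomain R] (u v : σ) :
    (Ideal.span {X u, X v} : Ideal (MvPolynomial σ R)).IsPrime := by
  rw [← Set.image_pair]
  exact isPrime_span_X_image _

theorem X_mem_span_X_pair_iff [Nontrivial R] {u v w : σ} :
    (X w : MvPolynomial σ R) ∈ Ideal.span {X u, X v} ↔ w = u ∨ w = v := by
  rw [← Set.image_pair, X_mem_span_X_image_iff, Set.mem_insert_iff, Set.mem_singleton_iff]

theorem prod_X_mem_span_X_pair_iff [IsDomain R] {u v : σ} {S : Finset σ} :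
    ∏ i ∈ S, (X i : MvPolynomial σ R) ∈ Ideal.span {X u, X v} ↔ u ∈ S ∨ v ∈ S := by
  have := isPrime_span_X_pair (R := R) u v
  simp only [Ideal.IsPrime.prod_mem_iff, X_mem_span_X_pair_iff]
  grind

theorem card_support_le_of_isHomogeneous {f : MvPolynomial σ R} {d : ℕ} (hf : f.IsHomogeneous d)
    {m : σ →₀ ℕ} (hm : m ∈ f.support) : m.support.card ≤ d := by
  have hdeg : m.degree = d := by
    rw [Finsupp.degree_eq_weight_one]
    exact hf (mem_support_iff.1 hm)
  rw [← hdeg, Finsupp.degree_apply]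
  simpa using Finset.card_nsmul_le_sum m.support m 1 fun i hi =>
    Nat.one_le_iff_ne_zero.2 (Finsupp.mem_support_iff.1 hi)

end MvPolynomial

section CoverIdeal

variable {K : Type} [Field K] {V : Type} {G : SimpleGraph V}

theorem mem_coverIdeal {p : MvPolynomial V K} :
    p ∈ coverIdeal K G ↔ ∀ ⦃u v⦄, G.Adj u v → p ∈ Ideal.span {X u, X v} := by
  simp [coverIdeal, Submodule.mem_iInf]

theorem isVertexCover_support_of_mem_coverIdeal {p : MvPolynomial V K} (hp : p ∈ coverIdeal K G)
    {m : V →₀ ℕ} (hm : m ∈ p.support) : G.IsVertexCover m.support := by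
  intro u v huv
  have := mem_coverIdeal.1 hp huv
  rw [← Set.image_pair, mem_ideal_span_X_image] at this
  obtain ⟨i, hi, hmi⟩ := this m hm
  rcases hi with rfl | rfl
  exacts [Or.inl (Finsupp.mem_support_iff.2 hmi), Or.inr (Finsupp.mem_support_iff.2 hmi)]

theorem prod_X_mem_coverIdeal {S : Finset V} (hS : G.IsVertexCover S) :
    ∏ i ∈ S, (X i : MvPolynomial V K) ∈ coverIdeal K G := by
  refine mem_coverIdeal.2 fun u v huv => ?_
  rcases hS huv with h | h
  all_goals exact Ideal.mem_of_dvd _ (Finset.dvd_prod_of_mem _ h) (Ideal.subset_span (by simp))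

theorem colon_coverIdeal_eq_span_X_pair {a b : V} (hab : G.Adj a b) {f : MvPolynomial V K}
    (hf : f ∈ coverIdeal K (G.deleteEdges {s(a, b)})) (hfab : f ∉ Ideal.span {X a, X b}) :
    (coverIdeal K G).colon (Ideal.span {f}) = Ideal.span {X a, X b} := by
  refine le_antisymm (fun r hr => ?_) (Ideal.span_le.2 ?_)
  · rw [Ideal.mem_colon_span_singleton] at hr
    exact ((isPrime_span_X_pair a b).mem_or_mem (mem_coverIdeal.1 hr hab)).resolve_right hfab
  · suffices ∀ w, w = a ∨ w = b → X w * f ∈ coverIdeal K G by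
      simpa [Set.insert_subset_iff, Ideal.mem_colon_span_singleton] using this
    intro w hw
    refine mem_coverIdeal.2 fun u v huv => ?_
    by_cases he : s(u, v) = s(a, b)
    · refine Ideal.mul_mem_right _ _ (X_mem_span_X_pair_iff.2 ?_)
      rw [Sym2.eq_iff] at he
      grind
    · exact Ideal.mul_mem_left _ _ (mem_coverIdeal.1 hf (deleteEdges_adj.2 ⟨huv, he⟩))

theorem exists_adj_mem_coverIdeal_deleteEdges [Finite V] {f : MvPolynomial V K}
    (hprime : ((coverIdeal K G).colon (Ideal.span {f})).IsPrime) :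
    ∃ a b, G.Adj a b ∧ f ∈ coverIdeal K (G.deleteEdges {s(a, b)}) := by
  classical
  have := Fintype.ofFinite V
  set edges := (Finset.univ : Finset (V × V)).filter fun e => G.Adj e.1 e.2
  have hinf : edges.inf (fun e => Ideal.span {X e.1, X e.2}) ≤
      (coverIdeal K G).colon (Ideal.span {f}) := fun r hr =>
    Ideal.mem_colon_span_singleton.2 <| Ideal.mul_mem_right f _ <| mem_coverIdeal.2
      fun u v huv => Finset.inf_le (f := fun e => Ideal.span {X e.1, X e.2})
        (Finset.mem_filter.2 ⟨Finset.mem_univ (u, v), huv⟩) hr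
  obtain ⟨⟨a, b⟩, hedge, hle⟩ := hprime.inf_le'.1 hinf
  have hab : G.Adj a b := (Finset.mem_filter.1 hedge).2
  refine ⟨a, b, hab, mem_coverIdeal.2 fun u v huv => ?_⟩
  obtain ⟨huv, hne⟩ := deleteEdges_adj.1 huv
  obtain ⟨w, hw, hwuv⟩ : ∃ w, (w = a ∨ w = b) ∧ ¬(w = u ∨ w = v) := by
    by_cases ha : a = u ∨ a = v
    · simp only [Set.mem_singleton_iff, Sym2.eq_iff] at hne
      exact ⟨b, Or.inr rfl, by grind [hab.ne]⟩
    · exact ⟨a, Or.inl rfl, ha⟩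
  have hwf : X w * f ∈ coverIdeal K G :=
    Ideal.mem_colon_span_singleton.1 (hle (X_mem_span_X_pair_iff.2 hw))
  exact ((isPrime_span_X_pair u v).mem_or_mem (mem_coverIdeal.1 hwf huv)).resolve_left
    (X_mem_span_X_pair_iff.not.2 hwuv)

end CoverIdeal

theorem Fin.val_sub_eq_one_iff {n : ℕ} {u v : Fin (n + 2)} :
    (u - v).val = 1 ↔ u.val = v.val + 1 ∨ (u.val = 0 ∧ v.val = n + 1) := by
  rcases le_or_gt v u with h | h
  · rw [Fin.sub_val_of_le h]
    omega
  · rw [Fin.coe_sub_iff_lt.2 h]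
    omega

theorem cycleGraph_deleteEdges_eq_pathGraph (n : ℕ) :
    (cycleGraph (n + 3)).deleteEdges {s(-1, 0)} = pathGraph (n + 3) := by
  ext u v
  rw [deleteEdges_adj, cycleGraph_adj', pathGraph_adj, Fin.val_sub_eq_one_iff,
    Fin.val_sub_eq_one_iff]
  simp only [Set.mem_singleton_iff, Sym2.eq_iff, Fin.ext_iff, Fin.coe_neg_one, Fin.val_zero]
  omega

theorem card_le_of_isVertexCover_pathGraph {n : ℕ} {C : Finset (Fin n)}
    (hC : (pathGraph n).IsVertexCover C) : n / 2 ≤ C.card := by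
  have hcover : Finset.range (n / 2) ⊆ C.image fun x => x.val / 2 := by
    intro t ht
    rw [Finset.mem_range] at ht
    have hadj : (pathGraph n).Adj ⟨2 * t, by omega⟩ ⟨2 * t + 1, by omega⟩ := by
      simp [pathGraph_adj]
    rcases hC hadj with h | h
    · exact Finset.mem_image.2 ⟨_, h, by simp⟩
    · exact Finset.mem_image.2 ⟨_, h, by simp only; omega⟩
  calc n / 2 = (Finset.range (n / 2)).card := (Finset.card_range _).symm
    _ ≤ (C.image fun x => x.val / 2).card := Finset.card_le_card hcover
    _ ≤ C.card := Finset.card_image_le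

theorem card_le_of_isVertexCover_cycleGraph_deleteEdges {n : ℕ} {a b : Fin (n + 3)}
    (hab : (cycleGraph (n + 3)).Adj a b) {C : Finset (Fin (n + 3))}
    (hC : ((cycleGraph (n + 3)).deleteEdges {s(a, b)}).IsVertexCover C) :
    (n + 3) / 2 ≤ C.card := by
  wlog hb : b = a + 1 generalizing a b
  · have ha : a = b + 1 := by
      rcases cycleGraph_adj.1 hab with h | h
      · exact sub_eq_iff_eq_add'.1 h
      · exact absurd (sub_eq_iff_eq_add'.1 h) hb
    exact this hab.symm (by rwa [Sym2.eq_swap]) ha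
  subst hb
  -- translation by `a + 1` maps the path `C_n ∖ {-1, 0}` onto `C_n ∖ {a, a + 1}`
  have hpath : (pathGraph (n + 3)).IsVertexCover
      (C.map (Equiv.subRight (a + 1)).toEmbedding : Set (Fin (n + 3))) := by
    rw [← cycleGraph_deleteEdges_eq_pathGraph]
    intro u v huv
    rw [deleteEdges_adj, cycleGraph_adj] at huv
    have h := @hC (u + (a + 1)) (v + (a + 1)) (by
      rw [deleteEdges_adj, cycleGraph_adj, add_sub_add_right_eq_sub, add_sub_add_right_eq_sub]
      refine ⟨huv.1, ?_⟩
      simp only [Set.mem_singleton_iff, Sym2.eq_iff] at huv ⊢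
      grind)
    simpa only [Finset.mem_coe, Finset.mem_map_equiv, Equiv.subRight_symm_apply] using h
  simpa using card_le_of_isVertexCover_pathGraph hpath

theorem exists_isVertexCover_pathGraph_card_le (n : ℕ) :
    ∃ S : Finset (Fin (n + 3)), -1 ∉ S ∧ 0 ∉ S ∧ S.card ≤ (n + 3) / 2 ∧
      (pathGraph (n + 3)).IsVertexCover S := by
  set g : ℕ → Fin (n + 3) := fun t => ⟨min (2 * t + 1) (n + 1), by omega⟩
  refine ⟨(Finset.range ((n + 3) / 2)).image g, ?_, ?_, ?_, fun u v huv => ?_⟩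
  · simp only [Finset.mem_image, Fin.ext_iff, Fin.coe_neg_one, g]
    omega
  · simp [g, Fin.ext_iff]
  · exact Finset.card_image_le.trans (Finset.card_range _).le
  · rw [pathGraph_adj] at huv
    -- the edge `{j, j + 1}` is covered by `g (j / 2)`
    have hmem : g (min u.val v.val / 2) ∈ (Finset.range ((n + 3) / 2)).image g :=
      Finset.mem_image_of_mem g (Finset.mem_range.2 (by omega))
    have hg : g (min u.val v.val / 2) = u ∨ g (min u.val v.val / 2) = v := by
      simp only [g, Fin.ext_iff]
      omega
    rcases hg with h | h
    · exact Or.inl (h ▸ hmem)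
    · exact Or.inr (h ▸ hmem)

theorem le_degree_of_isPrime_colon_coverIdeal_cycleGraph {K : Type} [Field K] {n d : ℕ}
    {f : MvPolynomial (Fin (n + 3)) K} (hf : f.IsHomogeneous d)
    (hprime : ((coverIdeal K (cycleGraph (n + 3))).colon (Ideal.span {f})).IsPrime) :
    (n + 3) / 2 ≤ d := by
  obtain ⟨a, b, hab, hfab⟩ := exists_adj_mem_coverIdeal_deleteEdges hprime
  have hf₀ : f ≠ 0 := by
    rintro rfl
    exact hprime.ne_top (by simp)
  obtain ⟨m, hm⟩ := support_nonempty.2 hf₀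
  calc (n + 3) / 2 ≤ m.support.card := card_le_of_isVertexCover_cycleGraph_deleteEdges hab
        (isVertexCover_support_of_mem_coverIdeal hfab hm)
    _ ≤ d := card_support_le_of_isHomogeneous hf hm

/-- For the cycle `C_n` (`n ≥ 3`), `v(J(C_n)) = ⌊n/2⌋`. -/
theorem vNumber_coverIdeal_cycleGraph
    {K : Type} [Field K] (n : ℕ) (hn : 3 ≤ n) :
    vNumber (coverIdeal K (SimpleGraph.cycleGraph n)) = n / 2 := by
  obtain ⟨n, rfl⟩ := Nat.exists_eq_add_of_le' hn
  obtain ⟨S, hS₁, hS₀, hcard, hS⟩ := exists_isVertexCover_pathGraph_card_le n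
  set g : MvPolynomial (Fin (n + 3)) K := ∏ i ∈ S, X i
  have hadj : (cycleGraph (n + 3)).Adj (-1) 0 := by simp [cycleGraph_adj]
  have hcolon : (coverIdeal K (cycleGraph (n + 3))).colon (Ideal.span {g}) =
      Ideal.span {X (-1), X 0} :=
    colon_coverIdeal_eq_span_X_pair hadj
      (prod_X_mem_coverIdeal (by rwa [cycleGraph_deleteEdges_eq_pathGraph]))
      (by simp [g, prod_X_mem_span_X_pair_iff, hS₁, hS₀])
  have hwitness : g.IsHomogeneous S.card := by
    simpa using IsHomogeneous.prod S X 1 fun i _ => isHomogeneous_X K i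
  have hprime : ((coverIdeal K (cycleGraph (n + 3))).colon (Ideal.span {g})).IsPrime :=
    hcolon ▸ isPrime_span_X_pair _ _
  unfold vNumber
  refine le_antisymm (le_trans (Nat.sInf_le ⟨g, hwitness, hprime⟩) hcard)
    (le_csInf ⟨_, g, hwitness, hprime⟩ ?_)
  rintro d ⟨f, hf, hfprime⟩
  exact le_degree_of_isPrime_colon_coverIdeal_cycleGraph hf hfprime

end
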